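/- Let 𝒫 be a simple parallel-connection polyhedron of simple polyhedra Q and R. If (x¹,s¹,y¹) and (x²,s²,y²) are vertices of 𝒫 with s¹ > 0 and s² > 0 (the shared variable is basic at both), then their graph distance in 𝒫 is at most diam(Ā) + diam(B̄). -/

import Mathlib

open Set Matrix

noncomputable section

/-- A polyhedron in standard form `{x : Mx = c, x ≥ 0}`. -/
def stdPoly {ι κ : Type*} [Fintype ι] [Fintype κ] (M : Matrix ι κ ℝ) (c : ι → ℝ) :
    Set (κ → ℝ) := {x | M.mulVec x = c ∧ ∀ j, 0 ≤ x j}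

/-- A vertex of a convex set: an extreme point. -/
def IsVertex {E : Type*} [AddCommGroup E] [Module ℝ E] (P : Set E) (v : E) : Prop :=
  v ∈ Set.extremePoints ℝ P

/-- Two vertices of `P` are adjacent if they are distinct and the segment
joining them is a face (an extreme subset) of `P`, i.e. an edge. -/
def Adj {E : Type*} [AddCommGroup E] [Module ℝ E] (P : Set E) (u v : E) : Prop :=
  u ≠ v ∧ IsVertex P u ∧ IsVertex P v ∧ IsExtreme ℝ P (segment ℝ u v)

/-- There is an edge walk of length at most `k` between `u` and `v` in `P`. -/
def HasWalk {E : Type*} [AddCommGroup E] [Module ℝ E] (P : Set E) (u v : E) (k : ℕ) : Prop :=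
  ∃ N ≤ k, ∃ f : ℕ → E, f 0 = u ∧ f N = v ∧ ∀ i < N, Adj P (f i) (f (i + 1))

/-- The combinatorial diameter of `P` is at most `k`. -/
def DiamLE {E : Type*} [AddCommGroup E] [Module ℝ E] (P : Set E) (k : ℕ) : Prop :=
  ∀ u v, IsVertex P u → IsVertex P v → HasWalk P u v k

/-- `diam(M) ≤ k`: every standard-form polyhedron with constraint matrix `M`
has combinatorial diameter at most `k`, regardless of the right-hand side. -/
def MatDiamLE {ι κ : Type*} [Fintype ι] [Fintype κ] (M : Matrix ι κ ℝ) (k : ℕ) : Prop :=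
  ∀ c, DiamLE (stdPoly M c) k

/-- Number of nonzero coordinates. -/
def suppCard {α : Type*} (x : α → ℝ) : ℕ := (Function.support x).ncard

/-- The matrix `Ā = [[A, 0], [a, 1]]`. -/
def Abar {mA nA : ℕ} (A : Matrix (Fin mA) (Fin nA) ℝ) (a : Fin nA → ℝ) :
    Matrix (Fin mA ⊕ Unit) (Fin nA ⊕ Unit) ℝ :=
  Matrix.of fun i j =>
    match i, j with
    | Sum.inl i, Sum.inl j => A i j
    | Sum.inl _, Sum.inr _ => 0
    | Sum.inr _, Sum.inl j => a j
    | Sum.inr _, Sum.inr _ => 1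

/-- The matrix `B̄ = [[1, b], [0, B]]`. -/
def Bbar {mB nB : ℕ} (B : Matrix (Fin mB) (Fin nB) ℝ) (b : Fin nB → ℝ) :
    Matrix (Unit ⊕ Fin mB) (Unit ⊕ Fin nB) ℝ :=
  Matrix.of fun i j =>
    match i, j with
    | Sum.inl _, Sum.inl _ => 1
    | Sum.inl _, Sum.inr j => b j
    | Sum.inr _, Sum.inl _ => 0
    | Sum.inr i, Sum.inr j => B i j

/-- The parallel-connection polyhedron `𝒫`, with points written `(x, s, y)`. -/
def parallelPoly {mA nA mB nB : ℕ} (A : Matrix (Fin mA) (Fin nA) ℝ) (a : Fin nA → ℝ)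
    (B : Matrix (Fin mB) (Fin nB) ℝ) (b : Fin nB → ℝ)
    (cA : Fin mA → ℝ) (ca cb : ℝ) (cB : Fin mB → ℝ) :
    Set ((Fin nA → ℝ) × ℝ × (Fin nB → ℝ)) :=
  {p | A.mulVec p.1 = cA ∧ a ⬝ᵥ p.1 + p.2.1 + b ⬝ᵥ p.2.2 = ca + cb ∧
       B.mulVec p.2.2 = cB ∧ (∀ i, 0 ≤ p.1 i) ∧ 0 ≤ p.2.1 ∧ ∀ j, 0 ≤ p.2.2 j}

/-- Total number of nonzero coordinates of a point `(x, s, y)`. -/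
def pSupp {nA nB : ℕ} (p : (Fin nA → ℝ) × ℝ × (Fin nB → ℝ)) : ℕ :=
  suppCard p.1 + (if p.2.1 = 0 then 0 else 1) + suppCard p.2.2


section AuxWalk

variable {E F : Type*} [AddCommGroup E] [Module ℝ E] [AddCommGroup F] [Module ℝ F]

lemma hasWalk_mono {P : Set E} {u v : E} {k l : ℕ} (hkl : k ≤ l) (h : HasWalk P u v k) :
    HasWalk P u v l := by
  obtain ⟨N, hN, f, h0, hN', hadj⟩ := h
  exact ⟨N, hN.trans hkl, f, h0, hN', hadj⟩

lemma hasWalk_trans {P : Set E} {u v w : E} {k l : ℕ}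
    (h1 : HasWalk P u v k) (h2 : HasWalk P v w l) : HasWalk P u w (k + l) := by
  obtain ⟨N1, hN1, f1, hf10, hf1N, hadj1⟩ := h1
  obtain ⟨N2, hN2, f2, hf20, hf2N, hadj2⟩ := h2
  refine ⟨N1 + N2, Nat.add_le_add hN1 hN2,
    fun i => if i ≤ N1 then f1 i else f2 (i - N1), by simp [hf10], ?_, ?_⟩
  · by_cases h : N2 = 0
    · simp [h, hf1N, ← hf20 ▸ hf2N ▸ congrArg f2 h.symm]
    · have : ¬ (N1 + N2 ≤ N1) := by omega
      simp [this, hf2N]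
  · intro i hi
    rcases lt_or_ge i N1 with h | h
    · have h1 : i ≤ N1 := h.le
      have h2 : i + 1 ≤ N1 := h
      simpa [h1, h2] using hadj1 i h
    · have h1 : i + 1 ≤ N1 ↔ False := by simp; omega
      have key : (if i ≤ N1 then f1 i else f2 (i - N1)) = f2 (i - N1) := by
        rcases eq_or_lt_of_le h with rfl | hlt
        · simp [hf1N, ← hf20]
        · have : ¬ i ≤ N1 := by omega
          simp [this]
      have h3 : i + 1 - N1 = (i - N1) + 1 := by omega
      simp only [h1, if_false, key, h3]
      exact hadj2 (i - N1) (by omega)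

lemma hasWalk_map {P : Set E} {Q : Set F} {g : E → F} {u v : E} {k : ℕ}
    (hg : ∀ p q, Adj P p q → Adj Q (g p) (g q)) (h : HasWalk P u v k) :
    HasWalk Q (g u) (g v) k := by
  obtain ⟨N, hN, f, h0, hN', hadj⟩ := h
  exact ⟨N, hN, g ∘ f, by simp [h0], by simp [hN'], fun i hi => hg _ _ (hadj i hi)⟩

lemma extreme_pair {P : Set E} {v : E}
    (h : ∀ ⦃x₁⦄, x₁ ∈ P → ∀ ⦃x₂⦄, x₂ ∈ P → v ∈ openSegment ℝ x₁ x₂ → x₁ = v)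
    {p q : E} (hp : p ∈ P) (hq : q ∈ P) (hs : v ∈ openSegment ℝ p q) : p = v ∧ q = v :=
  ⟨h hp hq hs, h hq hp (by rwa [openSegment_symm])⟩

lemma isExtreme_pair {P S : Set E} (h : IsExtreme ℝ P S) {p q z : E} (hp : p ∈ P)
    (hq : q ∈ P) (hz : z ∈ S) (hs : z ∈ openSegment ℝ p q) : p ∈ S ∧ q ∈ S :=
  ⟨h.2 hp hq hz hs, h.2 hq hp hz (by rwa [openSegment_symm])⟩

end AuxWalk

section AuxMat

variable {mA nA mB nB : ℕ}

lemma Abar_mulVec_inl (A : Matrix (Fin mA) (Fin nA) ℝ) (a : Fin nA → ℝ)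
    (z : (Fin nA ⊕ Unit) → ℝ) (i : Fin mA) :
    (Abar A a).mulVec z (Sum.inl i) = A.mulVec (fun j => z (Sum.inl j)) i := by
  simp [Abar, Matrix.mulVec, dotProduct, Fintype.sum_sum_type]

lemma Abar_mulVec_inr (A : Matrix (Fin mA) (Fin nA) ℝ) (a : Fin nA → ℝ)
    (z : (Fin nA ⊕ Unit) → ℝ) (u : Unit) :
    (Abar A a).mulVec z (Sum.inr u) = a ⬝ᵥ (fun j => z (Sum.inl j)) + z (Sum.inr ()) := by
  simp [Abar, Matrix.mulVec, dotProduct, Fintype.sum_sum_type]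

lemma Bbar_mulVec_inl (B : Matrix (Fin mB) (Fin nB) ℝ) (b : Fin nB → ℝ)
    (z : (Unit ⊕ Fin nB) → ℝ) (u : Unit) :
    (Bbar B b).mulVec z (Sum.inl u) = z (Sum.inl ()) + b ⬝ᵥ (fun j => z (Sum.inr j)) := by
  simp [Bbar, Matrix.mulVec, dotProduct, Fintype.sum_sum_type]

lemma Bbar_mulVec_inr (B : Matrix (Fin mB) (Fin nB) ℝ) (b : Fin nB → ℝ)
    (z : (Unit ⊕ Fin nB) → ℝ) (i : Fin mB) :
    (Bbar B b).mulVec z (Sum.inr i) = B.mulVec (fun j => z (Sum.inr j)) i := by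
  simp [Bbar, Matrix.mulVec, dotProduct, Fintype.sum_sum_type]

end AuxMat


section Extract

variable {mA nA mB nB : ℕ} {A : Matrix (Fin mA) (Fin nA) ℝ} {a : Fin nA → ℝ}
  {B : Matrix (Fin mB) (Fin nB) ℝ} {b : Fin nB → ℝ}
  {cA : Fin mA → ℝ} {ca cb : ℝ} {cB : Fin mB → ℝ}

lemma extract_x {x : Fin nA → ℝ} {s : ℝ} {y : Fin nB → ℝ}
    (hv : IsVertex (parallelPoly A a B b cA ca cb cB) (x, s, y)) (hs : 0 < s) :
    IsVertex (stdPoly A cA) x := by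
  obtain ⟨hmem, hext⟩ := hv
  obtain ⟨hAx, hsum, hBy, hx0, hs0, hy0⟩ := hmem
  simp only at hAx hsum hBy hx0 hs0 hy0
  refine ⟨⟨hAx, hx0⟩, ?_⟩
  rintro u ⟨hAu, hu0⟩ w ⟨hAw, hw0⟩ ⟨t1, t2, ht1, ht2, htsum, heq⟩
  set M : ℝ := |a ⬝ᵥ (u - x)| + |a ⬝ᵥ (w - x)| + 1 with hM
  have hMpos : 0 < M := by positivity
  set ε : ℝ := min 1 (s / M) with hε
  have hεpos : 0 < ε := lt_min one_pos (div_pos hs hMpos)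
  have hε1 : ε ≤ 1 := min_le_left _ _
  have hεM : ε * M ≤ s := by
    calc ε * M ≤ (s / M) * M := mul_le_mul_of_nonneg_right (min_le_right _ _) hMpos.le
    _ = s := by field_simp
  have key : ∀ v : Fin nA → ℝ, A.mulVec v = cA → (∀ i, 0 ≤ v i) → |a ⬝ᵥ (v - x)| ≤ M - 1 →
      (x + ε • (v - x), s - ε * (a ⬝ᵥ (v - x)), y) ∈ parallelPoly A a B b cA ca cb cB := by
    intro v hAv hv0 habs
    have h1 : ε * (a ⬝ᵥ (v - x)) ≤ ε * |a ⬝ᵥ (v - x)| :=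
      mul_le_mul_of_nonneg_left (le_abs_self _) hεpos.le
    have h2 : ε * |a ⬝ᵥ (v - x)| ≤ ε * M :=
      mul_le_mul_of_nonneg_left (by linarith) hεpos.le
    refine ⟨?_, ?_, hBy, ?_, ?_, hy0⟩
    · show A.mulVec (x + ε • (v - x)) = cA
      rw [Matrix.mulVec_add, Matrix.mulVec_smul, Matrix.mulVec_sub, hAv, hAx]
      simp
    · show a ⬝ᵥ (x + ε • (v - x)) + (s - ε * (a ⬝ᵥ (v - x))) + b ⬝ᵥ y = ca + cb
      rw [dotProduct_add, dotProduct_smul, smul_eq_mul]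
      linarith [hsum]
    · intro i
      show 0 ≤ x i + (ε • (v - x)) i
      have hexp : x i + (ε • (v - x)) i = (1 - ε) * x i + ε * v i := by
        simp [Pi.smul_apply, Pi.sub_apply, smul_eq_mul]; ring
      rw [hexp]
      have := hx0 i; have := hv0 i
      nlinarith
    · show (0:ℝ) ≤ s - ε * (a ⬝ᵥ (v - x))
      linarith
  have habs_u : |a ⬝ᵥ (u - x)| ≤ M - 1 := by
    rw [hM]; linarith [abs_nonneg (a ⬝ᵥ (w - x))]
  have habs_w : |a ⬝ᵥ (w - x)| ≤ M - 1 := by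
    rw [hM]; linarith [abs_nonneg (a ⬝ᵥ (u - x))]
  have hu := key u hAu hu0 habs_u
  have hw := key w hAw hw0 habs_w
  have hseg : (x, s, y) ∈ openSegment ℝ
      ((x + ε • (u - x), s - ε * (a ⬝ᵥ (u - x)), y) : (Fin nA → ℝ) × ℝ × (Fin nB → ℝ))
      (x + ε • (w - x), s - ε * (a ⬝ᵥ (w - x)), y) := by
    refine ⟨t1, t2, ht1, ht2, htsum, ?_⟩
    have hx' : t1 • (x + ε • (u - x)) + t2 • (x + ε • (w - x)) = x := by
      have : t1 • u + t2 • w = x := heq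
      have hxx : (t1 + t2) • x = x := by rw [htsum, one_smul]
      calc t1 • (x + ε • (u - x)) + t2 • (x + ε • (w - x))
          = (t1 + t2) • x + ε • (t1 • u + t2 • w - (t1 + t2) • x) := by
            module
      _ = x := by rw [this, htsum, one_smul]; simp
    have hdot : t1 * (a ⬝ᵥ (u - x)) + t2 * (a ⬝ᵥ (w - x)) = 0 := by
      have h1 : a ⬝ᵥ (t1 • (u - x) + t2 • (w - x)) =
          t1 * (a ⬝ᵥ (u - x)) + t2 * (a ⬝ᵥ (w - x)) := by
        rw [dotProduct_add, dotProduct_smul, dotProduct_smul]; rfl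
      have h2 : t1 • (u - x) + t2 • (w - x) = (0 : Fin nA → ℝ) := by
        have hxx : (t1 + t2) • x = x := by rw [htsum, one_smul]
        calc t1 • (u - x) + t2 • (w - x) = t1 • u + t2 • w - (t1 + t2) • x := by module
        _ = 0 := by rw [heq, hxx, sub_self]
      rw [← h1, h2, dotProduct_zero]
    have hs' : t1 * (s - ε * (a ⬝ᵥ (u - x))) + t2 * (s - ε * (a ⬝ᵥ (w - x))) = s := by
      have : t1 * (s - ε * (a ⬝ᵥ (u - x))) + t2 * (s - ε * (a ⬝ᵥ (w - x)))
          = (t1 + t2) * s - ε * (t1 * (a ⬝ᵥ (u - x)) + t2 * (a ⬝ᵥ (w - x))) := by ring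
      rw [this, hdot, htsum]; ring
    have hy' : t1 • y + t2 • y = y := by
      rw [← add_smul, htsum, one_smul]
    show (t1 • (x + ε • (u - x), s - ε * (a ⬝ᵥ (u - x)), y) +
        t2 • (x + ε • (w - x), s - ε * (a ⬝ᵥ (w - x)), y)) = (x, s, y)
    rw [Prod.smul_mk, Prod.smul_mk, Prod.smul_mk, Prod.smul_mk, Prod.mk_add_mk, Prod.mk_add_mk]
    exact Prod.ext hx' (Prod.ext (by simpa using hs') hy')
  obtain ⟨hu_eq, hw_eq⟩ := extreme_pair hext hu hw hseg
  have hu' : x + ε • (u - x) = x := congrArg Prod.fst hu_eq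
  have hw' : x + ε • (w - x) = x := congrArg Prod.fst hw_eq
  have hu'' : u = x := by
    have : ε • (u - x) = 0 := by
      have := hu'; rwa [add_eq_left] at this
    have := smul_eq_zero.mp this
    rcases this with h | h
    · exact absurd h hεpos.ne'
    · exact sub_eq_zero.mp h
  have hw'' : w = x := by
    have : ε • (w - x) = 0 := by
      have := hw'; rwa [add_eq_left] at this
    rcases smul_eq_zero.mp this with h | h
    · exact absurd h hεpos.ne'
    · exact sub_eq_zero.mp h
  exact hu''

lemma extract_y {x : Fin nA → ℝ} {s : ℝ} {y : Fin nB → ℝ}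
    (hv : IsVertex (parallelPoly A a B b cA ca cb cB) (x, s, y)) (hs : 0 < s) :
    IsVertex (stdPoly B cB) y := by
  obtain ⟨hmem, hext⟩ := hv
  obtain ⟨hAx, hsum, hBy, hx0, hs0, hy0⟩ := hmem
  simp only at hAx hsum hBy hx0 hs0 hy0
  refine ⟨⟨hBy, hy0⟩, ?_⟩
  rintro u ⟨hBu, hu0⟩ w ⟨hBw, hw0⟩ ⟨t1, t2, ht1, ht2, htsum, heq⟩
  set M : ℝ := |b ⬝ᵥ (u - y)| + |b ⬝ᵥ (w - y)| + 1 with hM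
  have hMpos : 0 < M := by positivity
  set ε : ℝ := min 1 (s / M) with hε
  have hεpos : 0 < ε := lt_min one_pos (div_pos hs hMpos)
  have hε1 : ε ≤ 1 := min_le_left _ _
  have hεM : ε * M ≤ s := by
    calc ε * M ≤ (s / M) * M := mul_le_mul_of_nonneg_right (min_le_right _ _) hMpos.le
    _ = s := by field_simp
  have key : ∀ v : Fin nB → ℝ, B.mulVec v = cB → (∀ i, 0 ≤ v i) → |b ⬝ᵥ (v - y)| ≤ M - 1 →
      (x, s - ε * (b ⬝ᵥ (v - y)), y + ε • (v - y)) ∈ parallelPoly A a B b cA ca cb cB := by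
    intro v hBv hv0 habs
    have h1 : ε * (b ⬝ᵥ (v - y)) ≤ ε * |b ⬝ᵥ (v - y)| :=
      mul_le_mul_of_nonneg_left (le_abs_self _) hεpos.le
    have h2 : ε * |b ⬝ᵥ (v - y)| ≤ ε * M :=
      mul_le_mul_of_nonneg_left (by linarith) hεpos.le
    refine ⟨hAx, ?_, ?_, hx0, ?_, ?_⟩
    · show a ⬝ᵥ x + (s - ε * (b ⬝ᵥ (v - y))) + b ⬝ᵥ (y + ε • (v - y)) = ca + cb
      rw [dotProduct_add, dotProduct_smul, smul_eq_mul]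
      linarith [hsum]
    · show B.mulVec (y + ε • (v - y)) = cB
      rw [Matrix.mulVec_add, Matrix.mulVec_smul, Matrix.mulVec_sub, hBv, hBy]
      simp
    · show (0:ℝ) ≤ s - ε * (b ⬝ᵥ (v - y))
      linarith
    · intro i
      show 0 ≤ y i + (ε • (v - y)) i
      have hexp : y i + (ε • (v - y)) i = (1 - ε) * y i + ε * v i := by
        simp [Pi.smul_apply, Pi.sub_apply, smul_eq_mul]; ring
      rw [hexp]
      have := hy0 i; have := hv0 i
      nlinarith
  have habs_u : |b ⬝ᵥ (u - y)| ≤ M - 1 := by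
    rw [hM]; linarith [abs_nonneg (b ⬝ᵥ (w - y))]
  have habs_w : |b ⬝ᵥ (w - y)| ≤ M - 1 := by
    rw [hM]; linarith [abs_nonneg (b ⬝ᵥ (u - y))]
  have hu := key u hBu hu0 habs_u
  have hw := key w hBw hw0 habs_w
  have hseg : (x, s, y) ∈ openSegment ℝ
      ((x, s - ε * (b ⬝ᵥ (u - y)), y + ε • (u - y)) : (Fin nA → ℝ) × ℝ × (Fin nB → ℝ))
      (x, s - ε * (b ⬝ᵥ (w - y)), y + ε • (w - y)) := by
    refine ⟨t1, t2, ht1, ht2, htsum, ?_⟩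
    have hy' : t1 • (y + ε • (u - y)) + t2 • (y + ε • (w - y)) = y := by
      have hxx : (t1 + t2) • y = y := by rw [htsum, one_smul]
      calc t1 • (y + ε • (u - y)) + t2 • (y + ε • (w - y))
          = (t1 + t2) • y + ε • (t1 • u + t2 • w - (t1 + t2) • y) := by module
      _ = y := by rw [heq, htsum, one_smul]; simp
    have hdot : t1 * (b ⬝ᵥ (u - y)) + t2 * (b ⬝ᵥ (w - y)) = 0 := by
      have h1 : b ⬝ᵥ (t1 • (u - y) + t2 • (w - y)) =
          t1 * (b ⬝ᵥ (u - y)) + t2 * (b ⬝ᵥ (w - y)) := by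
        rw [dotProduct_add, dotProduct_smul, dotProduct_smul]; rfl
      have h2 : t1 • (u - y) + t2 • (w - y) = (0 : Fin nB → ℝ) := by
        have hxx : (t1 + t2) • y = y := by rw [htsum, one_smul]
        calc t1 • (u - y) + t2 • (w - y) = t1 • u + t2 • w - (t1 + t2) • y := by module
        _ = 0 := by rw [heq, hxx, sub_self]
      rw [← h1, h2, dotProduct_zero]
    have hs' : t1 * (s - ε * (b ⬝ᵥ (u - y))) + t2 * (s - ε * (b ⬝ᵥ (w - y))) = s := by
      have : t1 * (s - ε * (b ⬝ᵥ (u - y))) + t2 * (s - ε * (b ⬝ᵥ (w - y)))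
          = (t1 + t2) * s - ε * (t1 * (b ⬝ᵥ (u - y)) + t2 * (b ⬝ᵥ (w - y))) := by ring
      rw [this, hdot, htsum]; ring
    have hx' : t1 • x + t2 • x = x := by rw [← add_smul, htsum, one_smul]
    show (t1 • (x, s - ε * (b ⬝ᵥ (u - y)), y + ε • (u - y)) +
        t2 • (x, s - ε * (b ⬝ᵥ (w - y)), y + ε • (w - y))) = (x, s, y)
    rw [Prod.smul_mk, Prod.smul_mk, Prod.smul_mk, Prod.smul_mk, Prod.mk_add_mk, Prod.mk_add_mk]
    exact Prod.ext hx' (Prod.ext (by simpa using hs') hy')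
  obtain ⟨hu_eq, hw_eq⟩ := extreme_pair hext hu hw hseg
  have hu' : y + ε • (u - y) = y := congrArg (fun p => p.2.2) hu_eq
  have hw' : y + ε • (w - y) = y := congrArg (fun p => p.2.2) hw_eq
  have hu'' : u = y := by
    have : ε • (u - y) = 0 := by
      have := hu'; rwa [add_eq_left] at this
    rcases smul_eq_zero.mp this with h | h
    · exact absurd h hεpos.ne'
    · exact sub_eq_zero.mp h
  have hw'' : w = y := by
    have : ε • (w - y) = 0 := by
      have := hw'; rwa [add_eq_left] at this
    rcases smul_eq_zero.mp this with h | h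
    · exact absurd h hεpos.ne'
    · exact sub_eq_zero.mp h
  exact hu''

end Extract



section LiftB

variable {mA nA mB nB : ℕ} {A : Matrix (Fin mA) (Fin nA) ℝ} {a : Fin nA → ℝ}
  {B : Matrix (Fin mB) (Fin nB) ℝ} {b : Fin nB → ℝ}
  {cA : Fin mA → ℝ} {ca cb : ℝ} {cB : Fin mB → ℝ} {x : Fin nA → ℝ}

/-- Lift a point of the `B̄`-polyhedron to a point of `𝒫` with fixed `x`. -/
def liftB (x : Fin nA → ℝ) (z : (Unit ⊕ Fin nB) → ℝ) : (Fin nA → ℝ) × ℝ × (Fin nB → ℝ) :=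
  (x, z (Sum.inl ()), fun j => z (Sum.inr j))

/-- Embed an `(s, y)` pair as a point of the `B̄`-polyhedron. -/
def embB {nB : ℕ} (s : ℝ) (y : Fin nB → ℝ) : (Unit ⊕ Fin nB) → ℝ :=
  Sum.elim (fun _ => s) y

lemma mem_stdPoly_Bbar_iff {σ : ℝ} {z : (Unit ⊕ Fin nB) → ℝ} :
    z ∈ stdPoly (Bbar B b) (Sum.elim (fun _ => σ) cB) ↔
    z (Sum.inl ()) + b ⬝ᵥ (fun j => z (Sum.inr j)) = σ ∧
    B.mulVec (fun j => z (Sum.inr j)) = cB ∧ 0 ≤ z (Sum.inl ()) ∧ ∀ j, 0 ≤ z (Sum.inr j) := by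
  constructor
  · rintro ⟨hM, hnn⟩
    refine ⟨?_, ?_, hnn _, fun j => hnn _⟩
    · have := congrFun hM (Sum.inl ()); rwa [Bbar_mulVec_inl] at this
    · funext i; have := congrFun hM (Sum.inr i); rwa [Bbar_mulVec_inr] at this
  · rintro ⟨h1, h2, h3, h4⟩
    refine ⟨funext fun i => ?_, fun j => ?_⟩
    · cases i with
      | inl u => rw [Bbar_mulVec_inl]; cases u; exact h1
      | inr i => rw [Bbar_mulVec_inr]; exact congrFun h2 i
    · cases j with
      | inl u => cases u; exact h3
      | inr j => exact h4 j

lemma liftB_mem (hAx : A.mulVec x = cA) (hx0 : ∀ i, 0 ≤ x i) {z : (Unit ⊕ Fin nB) → ℝ}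
    (hz : z ∈ stdPoly (Bbar B b) (Sum.elim (fun _ => ca + cb - a ⬝ᵥ x) cB)) :
    liftB x z ∈ parallelPoly A a B b cA ca cb cB := by
  obtain ⟨h1, h2, h3, h4⟩ := mem_stdPoly_Bbar_iff.mp hz
  exact ⟨hAx, by simp only [liftB]; linarith, h2, hx0, h3, h4⟩

lemma embB_mem (hAx : A.mulVec x = cA) {p : (Fin nA → ℝ) × ℝ × (Fin nB → ℝ)}
    (hp : p ∈ parallelPoly A a B b cA ca cb cB) (hpx : p.1 = x) :
    embB p.2.1 p.2.2 ∈ stdPoly (Bbar B b) (Sum.elim (fun _ => ca + cb - a ⬝ᵥ x) cB) := by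
  obtain ⟨h1, h2, h3, h4, h5, h6⟩ := hp
  refine mem_stdPoly_Bbar_iff.mpr ⟨?_, h3, h5, h6⟩
  rw [← hpx]; show p.2.1 + b ⬝ᵥ p.2.2 = ca + cb - a ⬝ᵥ p.1; linarith

lemma liftB_combo {t1 t2 : ℝ} (ht : t1 + t2 = 1) (z z' : (Unit ⊕ Fin nB) → ℝ) :
    t1 • liftB x z + t2 • liftB x z' = liftB x (t1 • z + t2 • z') := by
  refine Prod.ext ?_ (Prod.ext rfl rfl)
  show t1 • x + t2 • x = x
  rw [← add_smul, ht, one_smul]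

lemma liftB_openSegment_decomp {p q : (Fin nA → ℝ) × ℝ × (Fin nB → ℝ)}
    {z : (Unit ⊕ Fin nB) → ℝ} {t1 t2 : ℝ}
    (heq : t1 • p + t2 • q = liftB x z) :
    t1 • embB p.2.1 p.2.2 + t2 • embB q.2.1 q.2.2 = z := by
  funext i
  cases i with
  | inl u =>
    cases u
    exact congrArg (fun r => r.2.1) heq
  | inr j =>
    exact congrArg (fun r => r.2.2 j) heq

lemma liftB_vertex (hxv : IsVertex (stdPoly A cA) x) {z : (Unit ⊕ Fin nB) → ℝ}
    (hz : IsVertex (stdPoly (Bbar B b) (Sum.elim (fun _ => ca + cb - a ⬝ᵥ x) cB)) z) :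
    IsVertex (parallelPoly A a B b cA ca cb cB) (liftB x z) := by
  obtain ⟨⟨hAx, hx0⟩, hxe⟩ := hxv
  obtain ⟨hzmem, hze⟩ := hz
  refine ⟨liftB_mem hAx hx0 hzmem, ?_⟩
  rintro p hp q hq ⟨t1, t2, ht1, ht2, htsum, heq⟩
  have hpx : p.1 = x ∧ q.1 = x := by
    refine extreme_pair hxe ⟨hp.1, hp.2.2.2.1⟩ ⟨hq.1, hq.2.2.2.1⟩
      ⟨t1, t2, ht1, ht2, htsum, congrArg Prod.fst heq⟩
  have hzp := embB_mem hAx hp hpx.1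
  have hzq := embB_mem hAx hq hpx.2
  have hcombo := liftB_openSegment_decomp heq
  obtain ⟨hzp', hzq'⟩ := extreme_pair hze hzp hzq ⟨t1, t2, ht1, ht2, htsum, hcombo⟩
  suffices h : p = liftB x z ∧ q = liftB x z from h.1
  constructor
  · refine Prod.ext hpx.1 (Prod.ext ?_ ?_)
    · exact congrFun hzp' (Sum.inl ())
    · funext j; exact congrFun hzp' (Sum.inr j)
  · refine Prod.ext hpx.2 (Prod.ext ?_ ?_)
    · exact congrFun hzq' (Sum.inl ())
    · funext j; exact congrFun hzq' (Sum.inr j)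

lemma liftB_adj (hxv : IsVertex (stdPoly A cA) x) {z z' : (Unit ⊕ Fin nB) → ℝ}
    (hadj : Adj (stdPoly (Bbar B b) (Sum.elim (fun _ => ca + cb - a ⬝ᵥ x) cB)) z z') :
    Adj (parallelPoly A a B b cA ca cb cB) (liftB x z) (liftB x z') := by
  obtain ⟨hne, hz, hz', hext⟩ := hadj
  obtain ⟨⟨hAx, hx0⟩, hxe⟩ := hxv
  refine ⟨?_, liftB_vertex ⟨⟨hAx, hx0⟩, hxe⟩ hz, liftB_vertex ⟨⟨hAx, hx0⟩, hxe⟩ hz', ?_, ?_⟩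
  · intro h
    apply hne
    funext i
    cases i with
    | inl u => cases u; exact congrArg (fun r => r.2.1) h
    | inr j => exact congrArg (fun r => r.2.2 j) h
  · -- segment ⊆ P
    rintro w ⟨t1, t2, ht1, ht2, htsum, hw⟩
    have : w = liftB x (t1 • z + t2 • z') := by rw [← hw, liftB_combo htsum]
    rw [this]
    exact liftB_mem hAx hx0 (hext.1 ⟨t1, t2, ht1, ht2, htsum, rfl⟩)
  · rintro p hp q hq w ⟨t1, t2, ht1, ht2, htsum, hw⟩ ⟨r1, r2, hr1, hr2, hrsum, hr⟩
    have hwz : w = liftB x (t1 • z + t2 • z') := by rw [← hw, liftB_combo htsum]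
    have hzw_mem : t1 • z + t2 • z' ∈ segment ℝ z z' := ⟨t1, t2, ht1, ht2, htsum, rfl⟩
    rw [hwz] at hr
    have hpx : p.1 = x ∧ q.1 = x := by
      refine extreme_pair hxe ⟨hp.1, hp.2.2.2.1⟩ ⟨hq.1, hq.2.2.2.1⟩
        ⟨r1, r2, hr1, hr2, hrsum, congrArg Prod.fst hr⟩
    have hzp := embB_mem hAx hp hpx.1
    have hzq := embB_mem hAx hq hpx.2
    have hcombo := liftB_openSegment_decomp hr
    obtain ⟨hzp', hzq'⟩ := isExtreme_pair hext hzp hzq hzw_mem ⟨r1, r2, hr1, hr2, hrsum, hcombo⟩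
    have hplift : p = liftB x (embB p.2.1 p.2.2) := by
      refine Prod.ext hpx.1 (Prod.ext rfl rfl)
    have hqlift : q = liftB x (embB q.2.1 q.2.2) := by
      refine Prod.ext hpx.2 (Prod.ext rfl rfl)
    suffices h : p ∈ segment ℝ (liftB x z) (liftB x z') ∧
        q ∈ segment ℝ (liftB x z) (liftB x z') from h.1
    constructor
    · rw [hplift]
      obtain ⟨u1, u2, hu1, hu2, husum, hu⟩ := hzp'
      exact ⟨u1, u2, hu1, hu2, husum, by rw [liftB_combo husum, hu]⟩
    · rw [hqlift]
      obtain ⟨u1, u2, hu1, hu2, husum, hu⟩ := hzq'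
      exact ⟨u1, u2, hu1, hu2, husum, by rw [liftB_combo husum, hu]⟩

lemma embB_vertex {σ s : ℝ} {y : Fin nB → ℝ} (hyv : IsVertex (stdPoly B cB) y)
    (hs : 0 ≤ s) (hsum : s + b ⬝ᵥ y = σ) :
    IsVertex (stdPoly (Bbar B b) (Sum.elim (fun _ => σ) cB)) (embB s y) := by
  obtain ⟨⟨hBy, hy0⟩, hye⟩ := hyv
  refine ⟨mem_stdPoly_Bbar_iff.mpr ⟨hsum, hBy, hs, hy0⟩, ?_⟩
  rintro z1 hz1 z2 hz2 ⟨t1, t2, ht1, ht2, htsum, heq⟩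
  obtain ⟨h11, h12, h13, h14⟩ := mem_stdPoly_Bbar_iff.mp hz1
  obtain ⟨h21, h22, h23, h24⟩ := mem_stdPoly_Bbar_iff.mp hz2
  have hy_comb : t1 • (fun j => z1 (Sum.inr j)) + t2 • (fun j => z2 (Sum.inr j)) = y := by
    funext j; exact congrFun heq (Sum.inr j)
  obtain ⟨hy1, hy2⟩ := extreme_pair hye ⟨h12, h14⟩ ⟨h22, h24⟩ ⟨t1, t2, ht1, ht2, htsum, hy_comb⟩
  have hs1 : z1 (Sum.inl ()) = s := by
    have : b ⬝ᵥ (fun j => z1 (Sum.inr j)) = b ⬝ᵥ y := by rw [hy1]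
    linarith [h11, hsum, this]
  have hs2 : z2 (Sum.inl ()) = s := by
    have : b ⬝ᵥ (fun j => z2 (Sum.inr j)) = b ⬝ᵥ y := by rw [hy2]
    linarith [h21, hsum, this]
  suffices h : z1 = embB s y ∧ z2 = embB s y from h.1
  constructor
  · funext i
    cases i with
    | inl u => cases u; exact hs1
    | inr j => exact congrFun hy1 j
  · funext i
    cases i with
    | inl u => cases u; exact hs2
    | inr j => exact congrFun hy2 j

lemma walkB {dB : ℕ} (hdB : MatDiamLE (Bbar B b) dB)
    (hxv : IsVertex (stdPoly A cA) x)
    {s s' : ℝ} {y y' : Fin nB → ℝ}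
    (hy : IsVertex (stdPoly B cB) y) (hy' : IsVertex (stdPoly B cB) y')
    (hs : 0 ≤ s) (hs' : 0 ≤ s')
    (h1 : a ⬝ᵥ x + s + b ⬝ᵥ y = ca + cb) (h2 : a ⬝ᵥ x + s' + b ⬝ᵥ y' = ca + cb) :
    HasWalk (parallelPoly A a B b cA ca cb cB) (x, s, y) (x, s', y') dB := by
  have hz1 : IsVertex (stdPoly (Bbar B b) (Sum.elim (fun _ => ca + cb - a ⬝ᵥ x) cB))
      (embB s y) := embB_vertex hy hs (by linarith)
  have hz2 : IsVertex (stdPoly (Bbar B b) (Sum.elim (fun _ => ca + cb - a ⬝ᵥ x) cB))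
      (embB s' y') := embB_vertex hy' hs' (by linarith)
  have hwalk := hdB (Sum.elim (fun _ => ca + cb - a ⬝ᵥ x) cB) _ _ hz1 hz2
  have := hasWalk_map (fun p q hpq => liftB_adj hxv hpq) hwalk
  simpa [liftB, embB] using this

end LiftB


section LiftA

variable {mA nA mB nB : ℕ} {A : Matrix (Fin mA) (Fin nA) ℝ} {a : Fin nA → ℝ}
  {B : Matrix (Fin mB) (Fin nB) ℝ} {b : Fin nB → ℝ}
  {cA : Fin mA → ℝ} {ca cb : ℝ} {cB : Fin mB → ℝ} {y : Fin nB → ℝ}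

/-- Lift a point of the `Ā`-polyhedron to a point of `𝒫` with fixed `y`. -/
def liftA (y : Fin nB → ℝ) (z : (Fin nA ⊕ Unit) → ℝ) : (Fin nA → ℝ) × ℝ × (Fin nB → ℝ) :=
  (fun j => z (Sum.inl j), z (Sum.inr ()), y)

/-- Embed an `(x, s)` pair as a point of the `Ā`-polyhedron. -/
def embA {nA : ℕ} (x : Fin nA → ℝ) (s : ℝ) : (Fin nA ⊕ Unit) → ℝ :=
  Sum.elim x (fun _ => s)

lemma mem_stdPoly_Abar_iff {τ : ℝ} {z : (Fin nA ⊕ Unit) → ℝ} :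
    z ∈ stdPoly (Abar A a) (Sum.elim cA (fun _ => τ)) ↔
    A.mulVec (fun j => z (Sum.inl j)) = cA ∧
    a ⬝ᵥ (fun j => z (Sum.inl j)) + z (Sum.inr ()) = τ ∧
    (∀ j, 0 ≤ z (Sum.inl j)) ∧ 0 ≤ z (Sum.inr ()) := by
  constructor
  · rintro ⟨hM, hnn⟩
    refine ⟨?_, ?_, fun j => hnn _, hnn _⟩
    · funext i; have := congrFun hM (Sum.inl i); rwa [Abar_mulVec_inl] at this
    · have := congrFun hM (Sum.inr ()); rwa [Abar_mulVec_inr] at this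
  · rintro ⟨h1, h2, h3, h4⟩
    refine ⟨funext fun i => ?_, fun j => ?_⟩
    · cases i with
      | inl i => rw [Abar_mulVec_inl]; exact congrFun h1 i
      | inr u => rw [Abar_mulVec_inr]; cases u; exact h2
    · cases j with
      | inl j => exact h3 j
      | inr u => cases u; exact h4

lemma liftA_mem (hBy : B.mulVec y = cB) (hy0 : ∀ j, 0 ≤ y j) {z : (Fin nA ⊕ Unit) → ℝ}
    (hz : z ∈ stdPoly (Abar A a) (Sum.elim cA (fun _ => ca + cb - b ⬝ᵥ y))) :
    liftA y z ∈ parallelPoly A a B b cA ca cb cB := by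
  obtain ⟨h1, h2, h3, h4⟩ := mem_stdPoly_Abar_iff.mp hz
  exact ⟨h1, by simp only [liftA]; linarith, hBy, h3, h4, hy0⟩

lemma embA_mem (hBy : B.mulVec y = cB) {p : (Fin nA → ℝ) × ℝ × (Fin nB → ℝ)}
    (hp : p ∈ parallelPoly A a B b cA ca cb cB) (hpy : p.2.2 = y) :
    embA p.1 p.2.1 ∈ stdPoly (Abar A a) (Sum.elim cA (fun _ => ca + cb - b ⬝ᵥ y)) := by
  obtain ⟨h1, h2, h3, h4, h5, h6⟩ := hp
  refine mem_stdPoly_Abar_iff.mpr ⟨h1, ?_, h4, h5⟩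
  rw [← hpy]; show a ⬝ᵥ p.1 + p.2.1 = ca + cb - b ⬝ᵥ p.2.2; linarith

lemma liftA_combo {t1 t2 : ℝ} (ht : t1 + t2 = 1) (z z' : (Fin nA ⊕ Unit) → ℝ) :
    t1 • liftA y z + t2 • liftA y z' = liftA y (t1 • z + t2 • z') := by
  refine Prod.ext rfl (Prod.ext rfl ?_)
  show t1 • y + t2 • y = y
  rw [← add_smul, ht, one_smul]

lemma liftA_openSegment_decomp {p q : (Fin nA → ℝ) × ℝ × (Fin nB → ℝ)}
    {z : (Fin nA ⊕ Unit) → ℝ} {t1 t2 : ℝ}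
    (heq : t1 • p + t2 • q = liftA y z) :
    t1 • embA p.1 p.2.1 + t2 • embA q.1 q.2.1 = z := by
  funext i
  cases i with
  | inl j => exact congrArg (fun r => r.1 j) heq
  | inr u => cases u; exact congrArg (fun r => r.2.1) heq

lemma liftA_vertex (hyv : IsVertex (stdPoly B cB) y) {z : (Fin nA ⊕ Unit) → ℝ}
    (hz : IsVertex (stdPoly (Abar A a) (Sum.elim cA (fun _ => ca + cb - b ⬝ᵥ y))) z) :
    IsVertex (parallelPoly A a B b cA ca cb cB) (liftA y z) := by
  obtain ⟨⟨hBy, hy0⟩, hye⟩ := hyv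
  obtain ⟨hzmem, hze⟩ := hz
  refine ⟨liftA_mem hBy hy0 hzmem, ?_⟩
  rintro p hp q hq ⟨t1, t2, ht1, ht2, htsum, heq⟩
  have hpy : p.2.2 = y ∧ q.2.2 = y := by
    refine extreme_pair hye ⟨hp.2.2.1, hp.2.2.2.2.2⟩ ⟨hq.2.2.1, hq.2.2.2.2.2⟩
      ⟨t1, t2, ht1, ht2, htsum, congrArg (fun r => r.2.2) heq⟩
  have hzp := embA_mem hBy hp hpy.1
  have hzq := embA_mem hBy hq hpy.2
  have hcombo := liftA_openSegment_decomp heq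
  obtain ⟨hzp', hzq'⟩ := extreme_pair hze hzp hzq ⟨t1, t2, ht1, ht2, htsum, hcombo⟩
  suffices h : p = liftA y z ∧ q = liftA y z from h.1
  constructor
  · refine Prod.ext ?_ (Prod.ext ?_ hpy.1)
    · funext j; exact congrFun hzp' (Sum.inl j)
    · exact congrFun hzp' (Sum.inr ())
  · refine Prod.ext ?_ (Prod.ext ?_ hpy.2)
    · funext j; exact congrFun hzq' (Sum.inl j)
    · exact congrFun hzq' (Sum.inr ())

lemma liftA_adj (hyv : IsVertex (stdPoly B cB) y) {z z' : (Fin nA ⊕ Unit) → ℝ}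
    (hadj : Adj (stdPoly (Abar A a) (Sum.elim cA (fun _ => ca + cb - b ⬝ᵥ y))) z z') :
    Adj (parallelPoly A a B b cA ca cb cB) (liftA y z) (liftA y z') := by
  obtain ⟨hne, hz, hz', hext⟩ := hadj
  obtain ⟨⟨hBy, hy0⟩, hye⟩ := hyv
  refine ⟨?_, liftA_vertex ⟨⟨hBy, hy0⟩, hye⟩ hz, liftA_vertex ⟨⟨hBy, hy0⟩, hye⟩ hz', ?_, ?_⟩
  · intro h
    apply hne
    funext i
    cases i with
    | inl j => exact congrArg (fun r => r.1 j) h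
    | inr u => cases u; exact congrArg (fun r => r.2.1) h
  · rintro w ⟨t1, t2, ht1, ht2, htsum, hw⟩
    have : w = liftA y (t1 • z + t2 • z') := by rw [← hw, liftA_combo htsum]
    rw [this]
    exact liftA_mem hBy hy0 (hext.1 ⟨t1, t2, ht1, ht2, htsum, rfl⟩)
  · rintro p hp q hq w ⟨t1, t2, ht1, ht2, htsum, hw⟩ ⟨r1, r2, hr1, hr2, hrsum, hr⟩
    have hwz : w = liftA y (t1 • z + t2 • z') := by rw [← hw, liftA_combo htsum]
    have hzw_mem : t1 • z + t2 • z' ∈ segment ℝ z z' := ⟨t1, t2, ht1, ht2, htsum, rfl⟩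
    rw [hwz] at hr
    have hpy : p.2.2 = y ∧ q.2.2 = y := by
      refine extreme_pair hye ⟨hp.2.2.1, hp.2.2.2.2.2⟩ ⟨hq.2.2.1, hq.2.2.2.2.2⟩
        ⟨r1, r2, hr1, hr2, hrsum, congrArg (fun r => r.2.2) hr⟩
    have hzp := embA_mem hBy hp hpy.1
    have hzq := embA_mem hBy hq hpy.2
    have hcombo := liftA_openSegment_decomp hr
    obtain ⟨hzp', hzq'⟩ := isExtreme_pair hext hzp hzq hzw_mem ⟨r1, r2, hr1, hr2, hrsum, hcombo⟩
    have hplift : p = liftA y (embA p.1 p.2.1) := by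
      refine Prod.ext rfl (Prod.ext rfl hpy.1)
    have hqlift : q = liftA y (embA q.1 q.2.1) := by
      refine Prod.ext rfl (Prod.ext rfl hpy.2)
    suffices h : p ∈ segment ℝ (liftA y z) (liftA y z') ∧
        q ∈ segment ℝ (liftA y z) (liftA y z') from h.1
    constructor
    · rw [hplift]
      obtain ⟨u1, u2, hu1, hu2, husum, hu⟩ := hzp'
      exact ⟨u1, u2, hu1, hu2, husum, by rw [liftA_combo husum, hu]⟩
    · rw [hqlift]
      obtain ⟨u1, u2, hu1, hu2, husum, hu⟩ := hzq'
      exact ⟨u1, u2, hu1, hu2, husum, by rw [liftA_combo husum, hu]⟩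

lemma embA_vertex {τ s : ℝ} {x : Fin nA → ℝ} (hxv : IsVertex (stdPoly A cA) x)
    (hs : 0 ≤ s) (hsum : a ⬝ᵥ x + s = τ) :
    IsVertex (stdPoly (Abar A a) (Sum.elim cA (fun _ => τ))) (embA x s) := by
  obtain ⟨⟨hAx, hx0⟩, hxe⟩ := hxv
  refine ⟨mem_stdPoly_Abar_iff.mpr ⟨hAx, hsum, hx0, hs⟩, ?_⟩
  rintro z1 hz1 z2 hz2 ⟨t1, t2, ht1, ht2, htsum, heq⟩
  obtain ⟨h11, h12, h13, h14⟩ := mem_stdPoly_Abar_iff.mp hz1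
  obtain ⟨h21, h22, h23, h24⟩ := mem_stdPoly_Abar_iff.mp hz2
  have hx_comb : t1 • (fun j => z1 (Sum.inl j)) + t2 • (fun j => z2 (Sum.inl j)) = x := by
    funext j; exact congrFun heq (Sum.inl j)
  obtain ⟨hx1, hx2⟩ := extreme_pair hxe ⟨h11, h13⟩ ⟨h21, h23⟩ ⟨t1, t2, ht1, ht2, htsum, hx_comb⟩
  have hs1 : z1 (Sum.inr ()) = s := by
    have : a ⬝ᵥ (fun j => z1 (Sum.inl j)) = a ⬝ᵥ x := by rw [hx1]
    linarith [h12, hsum, this]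
  have hs2 : z2 (Sum.inr ()) = s := by
    have : a ⬝ᵥ (fun j => z2 (Sum.inl j)) = a ⬝ᵥ x := by rw [hx2]
    linarith [h22, hsum, this]
  suffices h : z1 = embA x s ∧ z2 = embA x s from h.1
  constructor
  · funext i
    cases i with
    | inl j => exact congrFun hx1 j
    | inr u => cases u; exact hs1
  · funext i
    cases i with
    | inl j => exact congrFun hx2 j
    | inr u => cases u; exact hs2

lemma walkA {dA : ℕ} (hdA : MatDiamLE (Abar A a) dA)
    (hyv : IsVertex (stdPoly B cB) y)
    {s s' : ℝ} {x x' : Fin nA → ℝ}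
    (hx : IsVertex (stdPoly A cA) x) (hx' : IsVertex (stdPoly A cA) x')
    (hs : 0 ≤ s) (hs' : 0 ≤ s')
    (h1 : a ⬝ᵥ x + s + b ⬝ᵥ y = ca + cb) (h2 : a ⬝ᵥ x' + s' + b ⬝ᵥ y = ca + cb) :
    HasWalk (parallelPoly A a B b cA ca cb cB) (x, s, y) (x', s', y) dA := by
  have hz1 : IsVertex (stdPoly (Abar A a) (Sum.elim cA (fun _ => ca + cb - b ⬝ᵥ y)))
      (embA x s) := embA_vertex hx hs (by linarith)
  have hz2 : IsVertex (stdPoly (Abar A a) (Sum.elim cA (fun _ => ca + cb - b ⬝ᵥ y)))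
      (embA x' s') := embA_vertex hx' hs' (by linarith)
  have hwalk := hdA (Sum.elim cA (fun _ => ca + cb - b ⬝ᵥ y)) _ _ hz1 hz2
  have := hasWalk_map (fun p q hpq => liftA_adj hyv hpq) hwalk
  simpa [liftA, embA] using this

end LiftA

/-- Let `𝒫` be the simple parallel-connection polyhedron of simple `Q`
and `R`.  If `(x¹, s¹, y¹)` and `(x², s², y²)` are vertices of `𝒫` with `s¹ > 0` and
`s² > 0` (the shared variable is basic at both), then their graph distance in `𝒫` is at
most `diam(Ā) + diam(B̄)`. -/
theorem parallel_basic_basic_distance {mA nA mB nB : ℕ}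
    (A : Matrix (Fin mA) (Fin nA) ℝ) (a : Fin nA → ℝ)
    (B : Matrix (Fin mB) (Fin nB) ℝ) (b : Fin nB → ℝ)
    (cA : Fin mA → ℝ) (ca cb : ℝ) (cB : Fin mB → ℝ)
    (hA : ∀ x : Fin nA → ℝ, A.mulVec x = cA → (∀ i, 0 ≤ x i) → mA ≤ suppCard x)
    (hB : ∀ y : Fin nB → ℝ, B.mulVec y = cB → (∀ j, 0 ≤ y j) → mB ≤ suppCard y)
    (hsimple : ∀ p, IsVertex (parallelPoly A a B b cA ca cb cB) p →
      pSupp p = mA + mB + 1)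
    (dA dB : ℕ) (hdA : MatDiamLE (Abar A a) dA) (hdB : MatDiamLE (Bbar B b) dB)
    (x₁ : Fin nA → ℝ) (s₁ : ℝ) (y₁ : Fin nB → ℝ)
    (x₂ : Fin nA → ℝ) (s₂ : ℝ) (y₂ : Fin nB → ℝ)
    (hv₁ : IsVertex (parallelPoly A a B b cA ca cb cB) (x₁, s₁, y₁))
    (hv₂ : IsVertex (parallelPoly A a B b cA ca cb cB) (x₂, s₂, y₂))
    (hs₁ : 0 < s₁) (hs₂ : 0 < s₂) :
    HasWalk (parallelPoly A a B b cA ca cb cB) (x₁, s₁, y₁) (x₂, s₂, y₂) (dA + dB) := by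
  obtain ⟨hAx1, hsum1, hBy1, hx10, hs10, hy10⟩ := hv₁.1
  obtain ⟨hAx2, hsum2, hBy2, hx20, hs20, hy20⟩ := hv₂.1
  simp only at hAx1 hsum1 hBy1 hx10 hs10 hy10 hAx2 hsum2 hBy2 hx20 hs20 hy20
  have hxv1 := extract_x hv₁ hs₁
  have hxv2 := extract_x hv₂ hs₂
  have hyv1 := extract_y hv₁ hs₁
  have hyv2 := extract_y hv₂ hs₂
  rcases le_total (a ⬝ᵥ x₁) (a ⬝ᵥ x₂) with h | h
  · have hs'0 : (0:ℝ) ≤ s₂ + (a ⬝ᵥ x₂ - a ⬝ᵥ x₁) := by linarith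
    have w1 : HasWalk (parallelPoly A a B b cA ca cb cB) (x₁, s₁, y₁)
        (x₁, s₂ + (a ⬝ᵥ x₂ - a ⬝ᵥ x₁), y₂) dB :=
      walkB hdB hxv1 hyv1 hyv2 hs₁.le hs'0 hsum1 (by linarith)
    have w2 : HasWalk (parallelPoly A a B b cA ca cb cB)
        (x₁, s₂ + (a ⬝ᵥ x₂ - a ⬝ᵥ x₁), y₂) (x₂, s₂, y₂) dA :=
      walkA hdA hyv2 hxv1 hxv2 hs'0 hs₂.le (by linarith) hsum2
    exact hasWalk_mono (by omega) (hasWalk_trans w1 w2)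
  · have hs'0 : (0:ℝ) ≤ s₁ + (a ⬝ᵥ x₁ - a ⬝ᵥ x₂) := by linarith
    have w1 : HasWalk (parallelPoly A a B b cA ca cb cB) (x₁, s₁, y₁)
        (x₂, s₁ + (a ⬝ᵥ x₁ - a ⬝ᵥ x₂), y₁) dA :=
      walkA hdA hyv1 hxv1 hxv2 hs₁.le hs'0 hsum1 (by linarith)
    have w2 : HasWalk (parallelPoly A a B b cA ca cb cB)
        (x₂, s₁ + (a ⬝ᵥ x₁ - a ⬝ᵥ x₂), y₁) (x₂, s₂, y₂) dB :=
      walkB hdB hxv2 hyv1 hyv2 hs'0 hs₂.le (by linarith) hsum2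
    exact hasWalk_trans w1 w2
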